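/- Let D be a strongly connected balanced bipartite digraph of order 2a with a ≥ 2 satisfying d(u)+d(v) ≥ 3a+1 for every dominating pair {u,v}. Then D contains a cycle factor, i.e., a collection of vertex-disjoint directed cycles covering all vertices of D. -/

import Mathlib

open Finset Function

variable {V : Type*}

/-- Out-degree of a vertex in a digraph given by arc relation `A`. -/
noncomputable def outDeg (A : V → V → Prop) (u : V) : ℕ := {v | A u v}.ncard

/-- In-degree of a vertex. -/
noncomputable def inDeg (A : V → V → Prop) (u : V) : ℕ := {v | A v u}.ncard

/-- Degree `d(u) = d⁺(u) + d⁻(u)`. -/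
noncomputable def deg (A : V → V → Prop) (u : V) : ℕ := outDeg A u + inDeg A u

/-- Strong connectedness: a directed path between every ordered pair of vertices. -/
def StronglyConnected (A : V → V → Prop) : Prop :=
  ∀ u v : V, Relation.ReflTransGen A u v

/-- `X, Y` form a bipartition of the digraph `A`. -/
def IsBipartition (A : V → V → Prop) (X Y : Set V) : Prop :=
  Disjoint X Y ∧ X ∪ Y = Set.univ ∧
    ∀ u v, A u v → (u ∈ X ∧ v ∈ Y) ∨ (u ∈ Y ∧ v ∈ X)

/-- `{u,v}` is a dominating pair: a common out-neighbour exists. -/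
def IsDominatingPair (A : V → V → Prop) (u v : V) : Prop :=
  u ≠ v ∧ ∃ w, A u w ∧ A v w

/-- `{u,v}` is a dominated pair: a common in-neighbour exists. -/
def IsDominatedPair (A : V → V → Prop) (u v : V) : Prop :=
  u ≠ v ∧ ∃ w, A w u ∧ A w v

/-- The digraph contains a directed cycle of length `l`. -/
def HasCycleOfLength (A : V → V → Prop) (l : ℕ) : Prop :=
  ∃ f : ZMod l → V, Function.Injective f ∧ ∀ i, A (f i) (f (i + 1))

/-- The digraph contains a Hamiltonian (directed) cycle. -/
def IsHamiltonian [Fintype V] (A : V → V → Prop) : Prop :=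
  ∃ f : ZMod (Fintype.card V) ≃ V, ∀ i, A (f i) (f (i + 1))

/-- The digraph is exactly one directed cycle through all its vertices. -/
def IsDirectedCycleDigraph [Fintype V] (A : V → V → Prop) : Prop :=
  ∃ f : ZMod (Fintype.card V) ≃ V, ∀ u v, A u v ↔ ∃ i, u = f i ∧ v = f (i + 1)

/-- A balanced bipartite digraph of order `2a` is bipancyclic: it has cycles of
all even lengths `2, 4, …, 2a`. -/
def Bipancyclic [Fintype V] (A : V → V → Prop) (a : ℕ) : Prop :=
  ∀ l, 1 ≤ l → l ≤ a → HasCycleOfLength A (2 * l)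

/-- A digraph is pancyclic: cycles of all lengths `2, …, n`. -/
def Pancyclic [Fintype V] (A : V → V → Prop) : Prop :=
  ∀ l, 2 ≤ l → l ≤ Fintype.card V → HasCycleOfLength A l

/-- A cycle factor: a spanning collection of vertex-disjoint directed cycles,
i.e. a permutation `σ` with `v → σ v` an arc for every `v` (in a loopless
digraph all orbits have length `≥ 2`). -/
def HasCycleFactor (A : V → V → Prop) : Prop :=
  ∃ σ : Equiv.Perm V, ∀ v, A v (σ v)

/-- `arcs(S,T) = |A[S,T]| + |A[T,S]|`. -/
noncomputable def arcsCount (A : V → V → Prop) (S T : Set V) : ℕ :=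
  {p : V × V | p.1 ∈ S ∧ p.2 ∈ T ∧ A p.1 p.2}.ncard +
  {p : V × V | p.1 ∈ T ∧ p.2 ∈ S ∧ A p.1 p.2}.ncard

/-! A cycle factor is a permutation `σ` with `v → σ v` for all `v`, i.e. a perfect matching from
`X` to `Y` together with one from `Y` to `X`, so by Hall's theorem it suffices to show
`|S| ≤ |N⁺(S)|` for `S ⊆ X` (and symmetrically for `Y`).

Let `S ⊆ X` be a minimal violator, `R = N⁺(S)`, `k = |R| < |S|`. By minimality every vertex of `R`
has two in-neighbours in `S`; they form a dominating pair of degree at most `k + a` each, so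
`2k ≥ a + 1`. The vertices of `T = Y \ R` receive no arc from `S`, so the degree condition makes
their out-neighbourhoods pairwise disjoint, hence of size at most `k + 1`, and `d(t) ≤ a` on `T`.
Then every arc leaving `T` or leaving `N⁺(T)` is the only arc entering its head, and
`N⁺(N⁺(T)) ⊆ T`. Thus `T ∪ N⁺(T)` is closed under in-neighbours, so by strong connectivity it is
everything, which forces `Y ⊆ T` although `|T| = a - k < a`. -/

section Neighbourhoods

variable [Fintype V]

open scoped Classical in
noncomputable def outNbrs (A : V → V → Prop) (u : V) : Finset V := {v | A u v}

open scoped Classical in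
noncomputable def inNbrs (A : V → V → Prop) (u : V) : Finset V := {v | A v u}

variable {A : V → V → Prop}

@[simp]
theorem mem_outNbrs {u v : V} : v ∈ outNbrs A u ↔ A u v := by
  simp [outNbrs]

@[simp]
theorem mem_inNbrs {u v : V} : v ∈ inNbrs A u ↔ A v u := by
  simp [inNbrs]

theorem deg_eq_card_add_card (u : V) : deg A u = (outNbrs A u).card + (inNbrs A u).card := by
  have hout : {v | A u v} = (outNbrs A u : Set V) := by ext; simp
  have hin : {v | A v u} = (inNbrs A u : Set V) := by ext; simp
  rw [deg, outDeg, inDeg, hout, hin, Set.ncard_coe_finset, Set.ncard_coe_finset]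

end Neighbourhoods

theorem Finset.card_le_ncard_of_coe_subset [Finite V] {s : Finset V} {X : Set V} (h : ↑s ⊆ X) :
    s.card ≤ X.ncard :=
  Set.ncard_coe_finset s ▸ Set.ncard_le_ncard h

theorem Finset.card_add_card_le_card_biUnion_add_one {ι α : Type*} [DecidableEq ι] [DecidableEq α]
    {T : Finset ι} {f : ι → Finset α} (hd : (T : Set ι).PairwiseDisjoint f)
    (hne : ∀ i ∈ T, (f i).Nonempty) {i : ι} (hi : i ∈ T) :
    (f i).card + T.card ≤ (T.biUnion f).card + 1 := by
  have hrest := card_le_card_biUnion (hd.subset (coe_subset.2 (erase_subset i T)))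
    fun j hj => hne j (mem_of_mem_erase hj)
  have hsplit : T.biUnion f = f i ∪ (T.erase i).biUnion f := by
    rw [← biUnion_insert, insert_erase hi]
  have hdisj : Disjoint (f i) ((T.erase i).biUnion f) := by
    rw [disjoint_biUnion_right]
    exact fun j hj => hd hi (mem_of_mem_erase hj) (ne_of_mem_erase hj).symm
  rw [hsplit, card_union_of_disjoint hdisj, ← card_erase_add_one hi]
  omega

theorem hasCycleFactor_of_injective [Finite V] {A : V → V → Prop} {f : V → V}
    (hf : Injective f) (hA : ∀ v, A v (f v)) : HasCycleFactor A :=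
  ⟨Equiv.ofBijective f hf.bijective_of_finite, hA⟩

theorem hasCycleFactor_of_forall_card_le_card_biUnion [Fintype V] [DecidableEq V] {A : V → V → Prop}
    (h : ∀ S : Finset V, S.card ≤ (S.biUnion (outNbrs A)).card) : HasCycleFactor A := by
  obtain ⟨f, hf, hA⟩ := (Finset.all_card_le_biUnion_card_iff_exists_injective _).1 h
  exact hasCycleFactor_of_injective hf fun v => mem_outNbrs.1 (hA v)

namespace StronglyConnected

variable {A : V → V → Prop}

theorem exists_arc_from [Nontrivial V] (hsc : StronglyConnected A) (u : V) : ∃ v, A u v := by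
  obtain ⟨w, hw⟩ := exists_ne u
  rcases (hsc u w).cases_head with h | ⟨v, huv, -⟩
  · exact absurd h.symm hw
  · exact ⟨v, huv⟩

theorem mem_of_inClosed (hsc : StronglyConnected A) {M : Set V}
    (hM : ∀ w ∈ M, ∀ y, A y w → y ∈ M) {m : V} (hm : m ∈ M) (u : V) : u ∈ M := by
  induction hsc u m using Relation.ReflTransGen.head_induction_on with
  | refl => exact hm
  | head huv _ ih => exact hM _ ih _ huv

end StronglyConnected

theorem mem_of_arc_of_unique_pred [Fintype V] {A : V → V → Prop} {M : Finset V}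
    (hsucc : ∀ v ∈ M, ∃ w ∈ M, A v w) (huniq : ∀ v ∈ M, ∀ w ∈ M, A v w → ∀ y, A y w → y = v) :
    ∀ w ∈ M, ∀ y, A y w → y ∈ M := by
  choose! G hGM hGA using hsucc
  have hinj : Set.InjOn G M := fun v hv v' hv' h =>
    (huniq v hv _ (hGM v hv) (hGA v hv) v' (h ▸ hGA v' hv')).symm
  intro w hw y hyw
  obtain ⟨v, hv, rfl⟩ := Finset.surjOn_of_injOn_of_card_le G hGM hinj le_rfl hw
  exact huniq v hv _ (hGM v hv) (hGA v hv) y hyw ▸ hv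

namespace IsBipartition

variable {A : V → V → Prop} {X Y : Set V}

theorem symm (hbip : IsBipartition A X Y) : IsBipartition A Y X :=
  ⟨hbip.1.symm, Set.union_comm X Y ▸ hbip.2.1, fun u v h => (hbip.2.2 u v h).symm⟩

theorem mem_or (hbip : IsBipartition A X Y) (v : V) : v ∈ X ∨ v ∈ Y :=
  Set.eq_univ_iff_forall.1 hbip.2.1 v

theorem notMem_right (hbip : IsBipartition A X Y) {v : V} (hv : v ∈ X) : v ∉ Y :=
  Set.disjoint_left.1 hbip.1 hv

theorem head_mem_right (hbip : IsBipartition A X Y) {u v : V} (huv : A u v) (hu : u ∈ X) :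
    v ∈ Y :=
  (hbip.2.2 u v huv).elim And.right fun h => absurd h.1 (hbip.notMem_right hu)

theorem tail_mem_right (hbip : IsBipartition A X Y) {u v : V} (huv : A u v) (hv : v ∈ X) :
    u ∈ Y :=
  (hbip.2.2 u v huv).elim (fun h => absurd h.2 (hbip.notMem_right hv)) And.left

theorem nontrivial (hbip : IsBipartition A X Y) (hX : X.Nonempty) (hY : Y.Nonempty) :
    Nontrivial V :=
  let ⟨x, hx⟩ := hX
  let ⟨y, hy⟩ := hY
  ⟨x, y, fun h => hbip.notMem_right hx (h ▸ hy)⟩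

variable [Fintype V]

theorem coe_outNbrs_subset (hbip : IsBipartition A X Y) {u : V} (hu : u ∈ X) :
    ↑(outNbrs A u) ⊆ Y :=
  fun _ hv => hbip.head_mem_right (mem_outNbrs.1 hv) hu

theorem coe_inNbrs_subset (hbip : IsBipartition A X Y) {u : V} (hu : u ∈ X) :
    ↑(inNbrs A u) ⊆ Y :=
  fun _ hv => hbip.tail_mem_right (mem_inNbrs.1 hv) hu

theorem deg_le {a : ℕ} (hbip : IsBipartition A X Y) (hX : X.ncard = a) (hY : Y.ncard = a)
    (v : V) : deg A v ≤ 2 * a := by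
  rw [deg_eq_card_add_card]
  rcases hbip.mem_or v with hv | hv
  · have := card_le_ncard_of_coe_subset (hbip.coe_outNbrs_subset hv)
    have := card_le_ncard_of_coe_subset (hbip.coe_inNbrs_subset hv)
    omega
  · have := card_le_ncard_of_coe_subset (hbip.symm.coe_outNbrs_subset hv)
    have := card_le_ncard_of_coe_subset (hbip.symm.coe_inNbrs_subset hv)
    omega

theorem forall_card_le_card_biUnion [DecidableEq V] (hbip : IsBipartition A X Y)
    (hXhall : ∀ S : Finset V, ↑S ⊆ X → S.card ≤ (S.biUnion (outNbrs A)).card)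
    (hYhall : ∀ S : Finset V, ↑S ⊆ Y → S.card ≤ (S.biUnion (outNbrs A)).card)
    (S : Finset V) : S.card ≤ (S.biUnion (outNbrs A)).card := by
  classical
  set SX := S.filter (· ∈ X)
  set SY := S.filter (· ∉ X)
  have hSX : ↑SX ⊆ X := fun v hv => (mem_filter.1 hv).2
  have hSY : ↑SY ⊆ Y := fun v hv => (hbip.mem_or v).resolve_left (mem_filter.1 hv).2
  have hdisj : Disjoint (SX.biUnion (outNbrs A)) (SY.biUnion (outNbrs A)) := by
    rw [disjoint_left]
    intro w hwX hwY
    obtain ⟨u, hu, huw⟩ := mem_biUnion.1 hwX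
    obtain ⟨v, hv, hvw⟩ := mem_biUnion.1 hwY
    exact hbip.notMem_right (hbip.symm.coe_outNbrs_subset (hSY hv) hvw)
      (hbip.coe_outNbrs_subset (hSX hu) huw)
  calc S.card = SX.card + SY.card := (card_filter_add_card_filter_not _).symm
    _ ≤ (SX.biUnion (outNbrs A)).card + (SY.biUnion (outNbrs A)).card :=
      add_le_add (hXhall SX hSX) (hYhall SY hSY)
    _ = (SX.biUnion (outNbrs A) ∪ SY.biUnion (outNbrs A)).card :=
      (card_union_of_disjoint hdisj).symm
    _ ≤ (S.biUnion (outNbrs A)).card := by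
      rw [← union_biUnion, filter_union_filter_not_eq]

end IsBipartition

theorem Finset.exists_ne_mem_of_card_biUnion_lt {ι α : Type*} [DecidableEq ι] [DecidableEq α]
    {t : ι → Finset α} {S : Finset ι}
    (hmin : ∀ u ∈ S, (S.erase u).card ≤ ((S.erase u).biUnion t).card)
    (hviol : (S.biUnion t).card < S.card) {w : α} (hw : w ∈ S.biUnion t) :
    ∃ u ∈ S, ∃ v ∈ S, u ≠ v ∧ w ∈ t u ∧ w ∈ t v := by
  obtain ⟨u, hu, hwu⟩ := mem_biUnion.1 hw
  by_contra! hno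
  have hsub : (S.erase u).biUnion t ⊆ (S.biUnion t).erase w := by
    intro w' hw'
    obtain ⟨v, hv, hw'v⟩ := mem_biUnion.1 hw'
    refine mem_erase.2 ⟨?_, mem_biUnion.2 ⟨v, mem_of_mem_erase hv, hw'v⟩⟩
    rintro rfl
    exact hno u hu v (mem_of_mem_erase hv) (ne_of_mem_erase hv).symm hwu hw'v
  have h1 := card_le_card hsub
  have h2 := hmin u hu
  rw [card_erase_of_mem hw] at h1
  rw [card_erase_of_mem hu] at h2
  have h3 := card_pos.2 ⟨w, hw⟩
  omega

theorem eq_of_arc_of_arc_of_deg_add_deg_le {A : V → V → Prop} {a : ℕ}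
    (hdeg : ∀ u v : V, IsDominatingPair A u v → 3 * a + 1 ≤ deg A u + deg A v)
    {u v w : V} (hu : A u w) (hv : A v w) (h : deg A u + deg A v ≤ 3 * a) : u = v := by
  by_contra hne
  have := hdeg u v ⟨hne, w, hu, hv⟩
  omega

namespace IsBipartition

variable [Fintype V] {A : V → V → Prop} {a : ℕ} {X Y : Set V}

theorem card_inNbrs_le_one (hbip : IsBipartition A X Y) (hX : X.ncard = a) (hY : Y.ncard = a)
    (hdeg : ∀ u v : V, IsDominatingPair A u v → 3 * a + 1 ≤ deg A u + deg A v)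
    {t x : V} (ht : deg A t ≤ a) (htx : A t x) : (inNbrs A x).card ≤ 1 := by
  have hpred : ∀ y ∈ inNbrs A x, y = t := fun y hy =>
    eq_of_arc_of_arc_of_deg_add_deg_le hdeg (mem_inNbrs.1 hy) htx
      (by have := hbip.deg_le hX hY y; omega)
  exact card_le_one.2 fun y hy z hz => (hpred y hy).trans (hpred z hz).symm

theorem deg_le_of_arc_of_forall_arc_mem (hbip : IsBipartition A X Y) (hX : X.ncard = a)
    (hY : Y.ncard = a)
    (hdeg : ∀ u v : V, IsDominatingPair A u v → 3 * a + 1 ≤ deg A u + deg A v)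
    {T : Finset V} (hTa : T.card < a) {t x : V} (ht : deg A t ≤ a) (htx : A t x)
    (hxT : ∀ w, A x w → w ∈ T) : deg A x ≤ a := by
  have hin := hbip.card_inNbrs_le_one hX hY hdeg ht htx
  have hout := card_le_card fun w hw => hxT w (mem_outNbrs.1 hw)
  rw [deg_eq_card_add_card]
  omega

theorem false_of_card_lt_of_forall_deg_le (hbip : IsBipartition A X Y) (hX : X.ncard = a) (hY : Y.ncard = a)
    (hdeg : ∀ u v : V, IsDominatingPair A u v → 3 * a + 1 ≤ deg A u + deg A v)
    (hsc : StronglyConnected A) {T : Finset V} (hTY : ↑T ⊆ Y) (hTne : T.Nonempty)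
    (hTa : T.card < a) (hTdeg : ∀ t ∈ T, deg A t ≤ a)
    (hTclosed : ∀ t ∈ T, ∀ x, A t x → ∀ w, A x w → w ∈ T) : False := by
  classical
  obtain ⟨t₀, ht₀⟩ := hTne
  have : Nontrivial V :=
    hbip.nontrivial (Set.nonempty_of_ncard_ne_zero (by omega)) ⟨t₀, hTY ht₀⟩
  set L := T.biUnion (outNbrs A)
  have hL : ∀ x ∈ L, ∃ t ∈ T, A t x := fun x hx => by
    obtain ⟨t, ht, htx⟩ := mem_biUnion.1 hx
    exact ⟨t, ht, mem_outNbrs.1 htx⟩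
  have hdegL : ∀ x ∈ L, deg A x ≤ a := fun x hx =>
    let ⟨t, ht, htx⟩ := hL x hx
    hbip.deg_le_of_arc_of_forall_arc_mem hX hY hdeg hTa (hTdeg t ht) htx (hTclosed t ht x htx)
  have hsucc : ∀ v ∈ T ∪ L, ∃ w ∈ T ∪ L, A v w := by
    intro v hv
    obtain ⟨w, hvw⟩ := hsc.exists_arc_from v
    refine ⟨w, ?_, hvw⟩
    rcases mem_union.1 hv with hv | hv
    · exact mem_union_right _ (mem_biUnion.2 ⟨v, hv, mem_outNbrs.2 hvw⟩)
    · obtain ⟨t, ht, htv⟩ := hL v hv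
      exact mem_union_left _ (hTclosed t ht v htv w hvw)
  have huniq : ∀ v ∈ T ∪ L, ∀ w ∈ T ∪ L, A v w → ∀ y, A y w → y = v := by
    intro v hv w _ hvw y hyw
    have hdegv : deg A v ≤ a := (mem_union.1 hv).elim (hTdeg v) (hdegL v)
    exact eq_of_arc_of_arc_of_deg_add_deg_le hdeg hyw hvw
      (by have := hbip.deg_le hX hY y; omega)
  have hYT : Y ⊆ T := by
    intro y hy
    have hyM : y ∈ T ∪ L := hsc.mem_of_inClosed (M := ↑(T ∪ L))
      (mem_of_arc_of_unique_pred hsucc huniq) (mem_union_left _ ht₀) y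
    refine (mem_union.1 hyM).resolve_right fun hyL => ?_
    obtain ⟨t, ht, hty⟩ := hL y hyL
    exact hbip.notMem_right (hbip.symm.head_mem_right hty (hTY ht)) hy
  have := Set.ncard_le_ncard hYT
  rw [Set.ncard_coe_finset] at this
  omega

theorem deg_le_of_forall_not_arc (hbip : IsBipartition A X Y) (hX : X.ncard = a)
    (hdeg : ∀ u v : V, IsDominatingPair A u v → 3 * a + 1 ≤ deg A u + deg A v)
    {S T : Finset V} (hSX : ↑S ⊆ X) (hTY : ↑T ⊆ Y) (hST : ∀ t ∈ T, ∀ u ∈ S, ¬A u t)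
    (hS : a + 3 ≤ 2 * S.card) (hTS : a + 1 ≤ T.card + S.card)
    (hout : ∀ t ∈ T, (outNbrs A t).Nonempty) : ∀ t ∈ T, deg A t ≤ a := by
  classical
  have hin : ∀ t ∈ T, (inNbrs A t).card + S.card ≤ a := by
    intro t ht
    have hdisj : Disjoint (inNbrs A t) S :=
      disjoint_left.2 fun u hu huS => hST t ht u huS (mem_inNbrs.1 hu)
    rw [← card_union_of_disjoint hdisj, ← hX]
    refine card_le_ncard_of_coe_subset ?_
    rw [coe_union]
    exact Set.union_subset (hbip.symm.coe_inNbrs_subset (hTY ht)) hSX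
  have houtX : ∀ t ∈ T, ↑(outNbrs A t) ⊆ X := fun t ht => hbip.symm.coe_outNbrs_subset (hTY ht)
  have hdisj : (T : Set V).PairwiseDisjoint (outNbrs A) := by
    intro t ht t' ht' hne
    refine disjoint_left.2 fun w hw hw' => ?_
    have := hdeg t t' ⟨hne, w, mem_outNbrs.1 hw, mem_outNbrs.1 hw'⟩
    have := card_le_ncard_of_coe_subset (houtX t ht)
    have := card_le_ncard_of_coe_subset (houtX t' ht')
    have := hin t ht
    have := hin t' ht'
    rw [deg_eq_card_add_card, deg_eq_card_add_card] at *
    omega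
  have hU : (T.biUnion (outNbrs A)).card ≤ a := hX ▸ card_le_ncard_of_coe_subset (by
    intro w hw
    obtain ⟨t, ht, hw⟩ := mem_biUnion.1 (mem_coe.1 hw)
    exact houtX t ht hw)
  intro t ht
  have := card_add_card_le_card_biUnion_add_one hdisj hout ht
  have := hin t ht
  rw [deg_eq_card_add_card]
  omega

theorem false_of_arc_of_arc_of_deg_lt (hbip : IsBipartition A X Y) (hX : X.ncard = a)
    (hY : Y.ncard = a)
    (hdeg : ∀ u v : V, IsDominatingPair A u v → 3 * a + 1 ≤ deg A u + deg A v)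
    {t x w u v : V} (ht : t ∈ Y) (htdeg : deg A t ≤ a) (htx : A t x) (hxw : A x w)
    (huv : u ≠ v) (huw : A u w) (hvw : A v w) (hu : deg A u < 2 * a) (hv : deg A v < 2 * a) :
    False := by
  have hx : x ∈ X := hbip.symm.head_mem_right htx ht
  have hdegx : deg A x ≤ a + 1 := by
    have := hbip.card_inNbrs_le_one hX hY hdeg htdeg htx
    have := card_le_ncard_of_coe_subset (hbip.coe_outNbrs_subset hx)
    rw [deg_eq_card_add_card]
    omega
  obtain ⟨y, hyx, hyw, hy⟩ : ∃ y, y ≠ x ∧ A y w ∧ deg A y < 2 * a := by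
    by_cases hux : u = x
    · exact ⟨v, hux ▸ huv.symm, hvw, hv⟩
    · exact ⟨u, hux, huw, hu⟩
  have := hdeg y x ⟨hyx, w, hyw, hxw⟩
  omega

theorem false_of_card_biUnion_lt [DecidableEq V] (hbip : IsBipartition A X Y)
    (hX : X.ncard = a) (hY : Y.ncard = a)
    (hdeg : ∀ u v : V, IsDominatingPair A u v → 3 * a + 1 ≤ deg A u + deg A v)
    (hsc : StronglyConnected A) {S : Finset V} (hSX : ↑S ⊆ X)
    (hviol : (S.biUnion (outNbrs A)).card < S.card)
    (htwo : ∀ w ∈ S.biUnion (outNbrs A), ∃ u ∈ S, ∃ v ∈ S, u ≠ v ∧ A u w ∧ A v w) : False := by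
  classical
  set R := S.biUnion (outNbrs A)
  have hSa : S.card ≤ a := hX ▸ card_le_ncard_of_coe_subset hSX
  obtain ⟨u₀, hu₀⟩ : S.Nonempty := card_pos.1 (by omega)
  have : Nontrivial V := hbip.nontrivial ⟨u₀, hSX hu₀⟩ (Set.nonempty_of_ncard_ne_zero (by omega))
  have hRY : ∀ w ∈ R, w ∈ Y := fun w hw => by
    obtain ⟨u, hu, huw⟩ := mem_biUnion.1 hw
    exact hbip.coe_outNbrs_subset (hSX hu) huw
  have hdegS : ∀ u ∈ S, deg A u ≤ R.card + a := by
    intro u hu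
    have hout : (outNbrs A u).card ≤ R.card := card_le_card (subset_biUnion_of_mem _ hu)
    have hin := card_le_ncard_of_coe_subset (hbip.coe_inNbrs_subset (hSX hu))
    rw [deg_eq_card_add_card]
    omega
  obtain ⟨w₀, hw₀⟩ : R.Nonempty :=
    let ⟨w, hw⟩ := hsc.exists_arc_from u₀
    ⟨w, mem_biUnion.2 ⟨u₀, hu₀, mem_outNbrs.2 hw⟩⟩
  have hRa : a + 1 ≤ 2 * R.card := by
    obtain ⟨u, hu, v, hv, huv, huw, hvw⟩ := htwo w₀ hw₀
    have := hdeg u v ⟨huv, w₀, huw, hvw⟩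
    have := hdegS u hu
    have := hdegS v hv
    omega
  set T := Y.toFinset \ R
  have hTY : ↑T ⊆ Y := fun t ht => Set.mem_toFinset.1 (mem_sdiff.1 ht).1
  have hTcard : T.card + R.card = a := by
    rw [card_sdiff_add_card_eq_card fun w hw => Set.mem_toFinset.2 (hRY w hw),
      ← Set.ncard_eq_toFinset_card', hY]
  have hTdeg := hbip.deg_le_of_forall_not_arc hX hdeg hSX hTY
    (fun t ht u hu hut => (mem_sdiff.1 ht).2 (mem_biUnion.2 ⟨u, hu, mem_outNbrs.2 hut⟩))
    (by omega) (by omega) fun t _ => let ⟨w, hw⟩ := hsc.exists_arc_from t; ⟨w, mem_outNbrs.2 hw⟩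
  refine hbip.false_of_card_lt_of_forall_deg_le hX hY hdeg hsc hTY (card_pos.1 (by omega)) (by omega) hTdeg ?_
  intro t ht x htx w hxw
  have hx : x ∈ X := hbip.symm.head_mem_right htx (hTY ht)
  refine mem_sdiff.2 ⟨Set.mem_toFinset.2 (hbip.head_mem_right hxw hx), fun hwR => ?_⟩
  obtain ⟨u, hu, v, hv, huv, huw, hvw⟩ := htwo w hwR
  exact hbip.false_of_arc_of_arc_of_deg_lt hX hY hdeg (hTY ht) (hTdeg t ht) htx hxw huv huw hvw
    (by have := hdegS u hu; omega) (by have := hdegS v hv; omega)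

theorem card_le_card_biUnion_outNbrs [DecidableEq V] (hbip : IsBipartition A X Y)
    (hX : X.ncard = a) (hY : Y.ncard = a)
    (hdeg : ∀ u v : V, IsDominatingPair A u v → 3 * a + 1 ≤ deg A u + deg A v)
    (hsc : StronglyConnected A) (S : Finset V) (hSX : ↑S ⊆ X) :
    S.card ≤ (S.biUnion (outNbrs A)).card := by
  induction S using Finset.strongInduction with
  | H S ih =>
    by_contra! hviol
    have hmin : ∀ u ∈ S, (S.erase u).card ≤ ((S.erase u).biUnion (outNbrs A)).card :=
      fun u hu => ih _ (erase_ssubset hu) ((coe_subset.2 (erase_subset u S)).trans hSX)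
    refine hbip.false_of_card_biUnion_lt hX hY hdeg hsc hSX hviol fun w hw => ?_
    obtain ⟨u, hu, v, hv, huv, huw, hvw⟩ := exists_ne_mem_of_card_biUnion_lt hmin hviol hw
    exact ⟨u, hu, v, hv, huv, mem_outNbrs.1 huw, mem_outNbrs.1 hvw⟩

end IsBipartition

theorem stmt_6_general {V : Type*} [Fintype V] (A : V → V → Prop) (a : ℕ) (X Y : Set V)
    (hbip : IsBipartition A X Y) (hX : X.ncard = a) (hY : Y.ncard = a)
    (hsc : StronglyConnected A)
    (hdeg : ∀ u v : V, IsDominatingPair A u v → 3 * a + 1 ≤ deg A u + deg A v) :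
    HasCycleFactor A := by
  classical
  exact hasCycleFactor_of_forall_card_le_card_biUnion <| hbip.forall_card_le_card_biUnion
    (hbip.card_le_card_biUnion_outNbrs hX hY hdeg hsc)
    (hbip.symm.card_le_card_biUnion_outNbrs hY hX hdeg hsc)

/-- such a digraph contains a cycle factor. -/
theorem stmt_6 {V : Type*} [Fintype V] (A : V → V → Prop) (a : ℕ) (X Y : Set V)
    (ha : 2 ≤ a) (hcard : Fintype.card V = 2 * a)
    (hbip : IsBipartition A X Y) (hX : X.ncard = a) (hY : Y.ncard = a)
    (hsc : StronglyConnected A)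
    (hdeg : ∀ u v : V, IsDominatingPair A u v → 3 * a + 1 ≤ deg A u + deg A v) :
    HasCycleFactor A :=
  stmt_6_general A a X Y hbip hX hY hsc hdeg
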